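/- Let V₁, V₂ be primitive isometries on finite-dimensional spaces with the same noise space K, and suppose there exist a unitary U : H₂ → H₁ and c ∈ ℂ with |c| = 1 such that V₂ = c(U* ⊗ id_K)V₁U. Then V₂ is primitive, its stationary state is ρ_{ss,2} = U*ρ_{ss,1}U, and V₁ and V₂ have identical stationary output states at all times: tr_{H₁}[V₁(n)ρ_{ss,1}V₁(n)*] = tr_{H₂}[V₂(n)ρ_{ss,2}V₂(n)*] for all n ∈ ℕ. -/

import Mathlib

open Matrix Filter
open scoped Kronecker ComplexOrder

noncomputable section

/-- The action of `Φ ⊗ id_n` on block matrices, used to define complete positivity. -/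
def tensorId {a b : Type*} (Φ : Matrix a a ℂ → Matrix b b ℂ) (n : ℕ)
    (X : Matrix (a × Fin n) (a × Fin n) ℂ) : Matrix (b × Fin n) (b × Fin n) ℂ :=
  fun p q => Φ (fun i j => X (i, p.2) (j, q.2)) p.1 q.1

/-- A map between matrix algebras is completely positive if `Φ ⊗ id_n` preserves
positive semidefiniteness for every `n`. -/
def IsCompletelyPositive {a b : Type*} [Fintype a] [Fintype b]
    (Φ : Matrix a a ℂ → Matrix b b ℂ) : Prop :=
  ∀ (n : ℕ) (X : Matrix (a × Fin n) (a × Fin n) ℂ), X.PosSemidef → (tensorId Φ n X).PosSemidef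

/-- The map `X ↦ V₁* (X ⊗ 1_K) V₂` on `B(H₂, H₁)`, as a linear endomorphism.
For `V₁ = V₂ = V` this is the Heisenberg channel associated with the isometry `V`. -/
def sandwich {α β : Type*} [Fintype α] [Fintype β] {k : ℕ}
    (V₁ : Matrix (α × Fin k) α ℂ) (V₂ : Matrix (β × Fin k) β ℂ) :
    Module.End ℂ (Matrix α β ℂ) where
  toFun X := V₁ᴴ * (X ⊗ₖ (1 : Matrix (Fin k) (Fin k) ℂ)) * V₂
  map_add' X Y := by simp [Matrix.add_kronecker, Matrix.add_mul, Matrix.mul_add]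
  map_smul' c X := by simp [Matrix.smul_kronecker, Matrix.smul_mul, Matrix.mul_smul]

/-- The Kraus operators `K_i` of an isometry `V : H → H ⊗ K`,
defined by `K_i φ = (id ⊗ ⟨i|) V φ`. -/
def kraus {D k : ℕ} (V : Matrix (Fin D × Fin k) (Fin D) ℂ) (i : Fin k) :
    Matrix (Fin D) (Fin D) ℂ :=
  fun a b => V (a, i) b

/-- The `n`-step Kraus operator `K_{ι(n-1)} ⋯ K_{ι(0)}` associated with a word `ι`. -/
def krausString {D k : ℕ} (V : Matrix (Fin D × Fin k) (Fin D) ℂ) :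
    (n : ℕ) → (Fin n → Fin k) → Matrix (Fin D) (Fin D) ℂ
  | 0, _ => 1
  | n + 1, ι => kraus V (ι (Fin.last n)) * krausString V n (fun m => ι m.castSucc)

/-- The output state `tr_H [V(n) ρ V(n)*]` after `n` steps, a density matrix on `K^⊗n`. -/
def outputState {D k : ℕ} (V : Matrix (Fin D × Fin k) (Fin D) ℂ)
    (ρ : Matrix (Fin D) (Fin D) ℂ) (n : ℕ) :
    Matrix (Fin n → Fin k) (Fin n → Fin k) ℂ :=
  fun ι ι' => Matrix.trace (krausString V n ι * ρ * (krausString V n ι')ᴴ)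

/-- The Schrödinger (predual) transition map `ρ ↦ Σ_i K_i ρ K_i*`. -/
def schrodinger {D k : ℕ} (V : Matrix (Fin D × Fin k) (Fin D) ℂ)
    (ρ : Matrix (Fin D) (Fin D) ℂ) : Matrix (Fin D) (Fin D) ℂ :=
  ∑ i, kraus V i * ρ * (kraus V i)ᴴ

/-- A linear endomorphism of a matrix algebra is primitive if some power of it maps every
nonzero positive semidefinite matrix to a positive definite one. -/
def PrimitiveMap {α : Type*} [Fintype α] [DecidableEq α]
    (T : Module.End ℂ (Matrix α α ℂ)) : Prop :=
  ∃ n : ℕ, ∀ X : Matrix α α ℂ, X.PosSemidef → X ≠ 0 → ((T ^ n) X).PosDef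

/-- An isometry `V : H → H ⊗ K` is primitive if its channel `X ↦ V*(X ⊗ 1)V` is primitive. -/
def PrimitiveIso {D k : ℕ} (V : Matrix (Fin D × Fin k) (Fin D) ℂ) : Prop :=
  PrimitiveMap (sandwich V V)

/-- The pure state `|x⟩⟨x|` associated with a vector `x`. -/
def outer {α : Type*} (x : α → ℂ) : Matrix α α ℂ := Matrix.vecMulVec x (star x)

/-- The trace norm of a matrix: the trace of `√(A* A)`. -/
def traceNorm {α : Type*} [Fintype α] [DecidableEq α] (A : Matrix α α ℂ) : ℝ :=
  ((Matrix.posSemidef_conjTranspose_mul_self A).1.eigenvectorUnitary.1 *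
    Matrix.diagonal (((↑) : ℝ → ℂ) ∘ (Real.sqrt ·) ∘ (Matrix.posSemidef_conjTranspose_mul_self A).1.eigenvalues) *
    (star (Matrix.posSemidef_conjTranspose_mul_self A).1.eigenvectorUnitary : Matrix α α ℂ)).trace.re

/-- A quantum channel: a completely positive trace preserving linear map. -/
def IsCPTP {α β : Type*} [Fintype α] [Fintype β]
    (Φ : Matrix α α ℂ →ₗ[ℂ] Matrix β β ℂ) : Prop :=
  IsCompletelyPositive (Φ : Matrix α α ℂ → Matrix β β ℂ) ∧
    ∀ X : Matrix α α ℂ, (Φ X).trace = X.trace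


/-!
Conjugation `A ↦ Uᴴ A U` by a unitary `U` is a trace- and positivity-preserving isomorphism
of matrix algebras. The gauge transformation `V₂ = c (Uᴴ ⊗ 1) V₁ U` conjugates the Heisenberg
channel of `V₁` into that of `V₂` (the phase enters as `|c|² = 1`), so primitivity transfers.
It also turns every `n`-step Kraus operator `K_ι` of `V₁` into `cⁿ Uᴴ K_ι U`; in the
Schrödinger map and in the output states these appear paired with their adjoints, so the
phases cancel and the inner factors `U Uᴴ` collapse, leaving a conjugate (or, under the
trace, an unchanged) expression.
-/

lemma Complex.star_mul_self_of_norm_eq_one {c : ℂ} (hc : ‖c‖ = 1) : star c * c = 1 := by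
  rw [Complex.star_def, Complex.conj_mul', hc]
  norm_num

section Conjugation

variable {m n : Type*} [Fintype m] {U : Matrix m n ℂ}

lemma conjTranspose_conj (A : Matrix m m ℂ) : (Uᴴ * A * U)ᴴ = Uᴴ * Aᴴ * U := by
  simp only [conjTranspose_mul, conjTranspose_conjTranspose, Matrix.mul_assoc]

variable [Fintype n]

lemma conj_mul_conj [DecidableEq m] (hU : U * Uᴴ = 1) (A B : Matrix m m ℂ) :
    (Uᴴ * A * U) * (Uᴴ * B * U) = Uᴴ * (A * B) * U := by
  simp only [Matrix.mul_assoc]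
  rw [← Matrix.mul_assoc U Uᴴ, hU, Matrix.one_mul]

lemma conj_mul_conj_mul_conj [DecidableEq m] (hU : U * Uᴴ = 1) (A B C : Matrix m m ℂ) :
    (Uᴴ * A * U) * (Uᴴ * B * U) * (Uᴴ * C * U) = Uᴴ * (A * B * C) * U := by
  rw [conj_mul_conj hU, conj_mul_conj hU]

lemma conj_unconj [DecidableEq n] (hU : Uᴴ * U = 1) (X : Matrix n n ℂ) :
    Uᴴ * (U * X * Uᴴ) * U = X := by
  simp only [Matrix.mul_assoc]
  rw [hU, Matrix.mul_one, ← Matrix.mul_assoc, hU, Matrix.one_mul]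

lemma unconj_conj [DecidableEq m] (hU : U * Uᴴ = 1) (Y : Matrix m m ℂ) :
    U * (Uᴴ * Y * U) * Uᴴ = Y := by
  simp only [Matrix.mul_assoc]
  rw [hU, Matrix.mul_one, ← Matrix.mul_assoc, hU, Matrix.one_mul]

lemma trace_conj [DecidableEq m] (hU : U * Uᴴ = 1) (A : Matrix m m ℂ) :
    (Uᴴ * A * U).trace = A.trace := by
  rw [Matrix.trace_mul_cycle, hU, Matrix.one_mul]

lemma Matrix.PosDef.conj [DecidableEq n] {A : Matrix m m ℂ} (hA : A.PosDef) (hU : Uᴴ * U = 1) :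
    (Uᴴ * A * U).PosDef := by
  have hinj : Function.LeftInverse Uᴴ.mulVec U.mulVec := fun x => by
    rw [Matrix.mulVec_mulVec, hU, Matrix.one_mulVec]
  exact hA.conjTranspose_mul_mul_same hinj.injective

variable [DecidableEq m] [DecidableEq n]

lemma pow_apply_eq_conj {T₁ : Module.End ℂ (Matrix m m ℂ)} {T₂ : Module.End ℂ (Matrix n n ℂ)}
    (hU₁ : Uᴴ * U = 1) (hU₂ : U * Uᴴ = 1) (hT : ∀ X, T₂ X = Uᴴ * T₁ (U * X * Uᴴ) * U)
    (N : ℕ) (X : Matrix n n ℂ) :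
    (T₂ ^ N) X = Uᴴ * (T₁ ^ N) (U * X * Uᴴ) * U := by
  induction N generalizing X with
  | zero => exact (conj_unconj hU₁ X).symm
  | succ N ih =>
    rw [pow_succ', pow_succ', Module.End.mul_apply, Module.End.mul_apply, ih, hT, unconj_conj hU₂]

lemma PrimitiveMap.of_conj {T₁ : Module.End ℂ (Matrix m m ℂ)} {T₂ : Module.End ℂ (Matrix n n ℂ)}
    (hU₁ : Uᴴ * U = 1) (hU₂ : U * Uᴴ = 1) (hT : ∀ X, T₂ X = Uᴴ * T₁ (U * X * Uᴴ) * U)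
    (hT₁ : PrimitiveMap T₁) : PrimitiveMap T₂ := by
  obtain ⟨N, hN⟩ := hT₁
  refine ⟨N, fun X hX hX0 => ?_⟩
  have hpsd : (U * X * Uᴴ).PosSemidef := hX.mul_mul_conjTranspose_same U
  have hne : U * X * Uᴴ ≠ 0 := fun h => hX0 <| by
    rw [← conj_unconj hU₁ X, h, Matrix.mul_zero, Matrix.zero_mul]
  rw [pow_apply_eq_conj hU₁ hU₂ hT]
  exact (hN _ hpsd hne).conj hU₁

end Conjugation

section Gauge

variable {D₁ D₂ k : ℕ}

def gaugeTransform (c : ℂ) (U : Matrix (Fin D₁) (Fin D₂) ℂ)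
    (V : Matrix (Fin D₁ × Fin k) (Fin D₁) ℂ) : Matrix (Fin D₂ × Fin k) (Fin D₂) ℂ :=
  c • ((Uᴴ ⊗ₖ (1 : Matrix (Fin k) (Fin k) ℂ)) * V * U)

variable {c : ℂ} {U : Matrix (Fin D₁) (Fin D₂) ℂ} {V : Matrix (Fin D₁ × Fin k) (Fin D₁) ℂ}

lemma kraus_gaugeTransform (i : Fin k) :
    kraus (gaugeTransform c U V) i = c • (Uᴴ * kraus V i * U) := by
  ext a b
  simp only [gaugeTransform, kraus, Matrix.smul_apply, Matrix.mul_apply, Fintype.sum_prod_type,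
    Matrix.kroneckerMap_apply, Matrix.one_apply, mul_ite, mul_one, mul_zero,
    ite_mul, zero_mul, Finset.sum_ite_eq, Finset.mem_univ, if_true]

lemma krausString_gaugeTransform (hU₁ : Uᴴ * U = 1) (hU₂ : U * Uᴴ = 1) (n : ℕ)
    (ι : Fin n → Fin k) :
    krausString (gaugeTransform c U V) n ι = c ^ n • (Uᴴ * krausString V n ι * U) := by
  induction n with
  | zero => simp [krausString, hU₁]
  | succ n ih =>
    rw [krausString, krausString, kraus_gaugeTransform, ih, Matrix.smul_mul, Matrix.mul_smul,
      smul_smul, conj_mul_conj hU₂, ← pow_succ']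

lemma sandwich_gaugeTransform (hc : ‖c‖ = 1) (X : Matrix (Fin D₂) (Fin D₂) ℂ) :
    sandwich (gaugeTransform c U V) (gaugeTransform c U V) X
      = Uᴴ * sandwich V V (U * X * Uᴴ) * U := by
  simp only [sandwich, gaugeTransform, LinearMap.coe_mk, AddHom.coe_mk, conjTranspose_smul,
    conjTranspose_mul, conjTranspose_kronecker, conjTranspose_one, conjTranspose_conjTranspose,
    Matrix.smul_mul, Matrix.mul_smul, smul_smul, Matrix.mul_assoc]
  rw [mul_comm c, Complex.star_mul_self_of_norm_eq_one hc, one_smul,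
    ← Matrix.mul_assoc (X ⊗ₖ _), ← mul_kronecker_mul, Matrix.one_mul,
    ← Matrix.mul_assoc (U ⊗ₖ _), ← mul_kronecker_mul, Matrix.one_mul]

lemma schrodinger_gaugeTransform (hc : ‖c‖ = 1) (hU₂ : U * Uᴴ = 1)
    (ρ : Matrix (Fin D₁) (Fin D₁) ℂ) :
    schrodinger (gaugeTransform c U V) (Uᴴ * ρ * U) = Uᴴ * schrodinger V ρ * U := by
  have hterm : ∀ i,
      kraus (gaugeTransform c U V) i * (Uᴴ * ρ * U) * (kraus (gaugeTransform c U V) i)ᴴ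
        = Uᴴ * (kraus V i * ρ * (kraus V i)ᴴ) * U := fun i => by
    rw [kraus_gaugeTransform, conjTranspose_smul, conjTranspose_conj]
    simp only [Matrix.smul_mul, Matrix.mul_smul, smul_smul]
    rw [Complex.star_mul_self_of_norm_eq_one hc, one_smul, conj_mul_conj_mul_conj hU₂]
  simp only [schrodinger, hterm, ← Matrix.sum_mul, ← Matrix.mul_sum]

lemma outputState_gaugeTransform (hc : ‖c‖ = 1) (hU₁ : Uᴴ * U = 1) (hU₂ : U * Uᴴ = 1)
    (ρ : Matrix (Fin D₁) (Fin D₁) ℂ) (n : ℕ) :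
    outputState (gaugeTransform c U V) (Uᴴ * ρ * U) n = outputState V ρ n := by
  have hcn : star (c ^ n) * c ^ n = 1 := by
    rw [star_pow, ← mul_pow, Complex.star_mul_self_of_norm_eq_one hc, one_pow]
  ext ι ι'
  rw [outputState, outputState, krausString_gaugeTransform hU₁ hU₂,
    krausString_gaugeTransform hU₁ hU₂, conjTranspose_smul, conjTranspose_conj]
  simp only [Matrix.smul_mul, Matrix.mul_smul, smul_smul]
  rw [hcn, one_smul, conj_mul_conj_mul_conj hU₂, trace_conj hU₂]

end Gauge

theorem gauge_equivalent_isometries_same_output_general (D₁ D₂ k : ℕ)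
    (V₁ : Matrix (Fin D₁ × Fin k) (Fin D₁) ℂ)
    (hPrim₁ : PrimitiveIso V₁)
    (ρ₁ : Matrix (Fin D₁) (Fin D₁) ℂ) (hρ₁pos : ρ₁.PosDef) (hρ₁tr : ρ₁.trace = 1)
    (hρ₁stat : schrodinger V₁ ρ₁ = ρ₁)
    (U : Matrix (Fin D₁) (Fin D₂) ℂ) (hU₁ : Uᴴ * U = 1) (hU₂ : U * Uᴴ = 1)
    (c : ℂ) (hc : ‖c‖ = 1)
    (V₂ : Matrix (Fin D₂ × Fin k) (Fin D₂) ℂ)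
    (hV₂ : V₂ = c • ((Uᴴ ⊗ₖ (1 : Matrix (Fin k) (Fin k) ℂ)) * V₁ * U)) :
    PrimitiveIso V₂ ∧
    (Uᴴ * ρ₁ * U).PosDef ∧ (Uᴴ * ρ₁ * U).trace = 1 ∧
    schrodinger V₂ (Uᴴ * ρ₁ * U) = Uᴴ * ρ₁ * U ∧
    ∀ n : ℕ, outputState V₁ ρ₁ n = outputState V₂ (Uᴴ * ρ₁ * U) n := by
  obtain rfl : V₂ = gaugeTransform c U V₁ := hV₂
  refine ⟨PrimitiveMap.of_conj hU₁ hU₂ (sandwich_gaugeTransform hc) hPrim₁, hρ₁pos.conj hU₁,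
    (trace_conj hU₂ ρ₁).trans hρ₁tr, ?_, fun n => (outputState_gaugeTransform hc hU₁ hU₂ ρ₁ n).symm⟩
  rw [schrodinger_gaugeTransform hc hU₂, hρ₁stat]

/-- If `V₂ = c (U* ⊗ 1) V₁ U` with `U` unitary and `|c| = 1`, then `V₂` is primitive,
`U* ρ_{ss,1} U` is its stationary state, and the stationary outputs of `V₁` and `V₂`
coincide at all times. -/
theorem gauge_equivalent_isometries_same_output (D₁ D₂ k : ℕ)
    (V₁ : Matrix (Fin D₁ × Fin k) (Fin D₁) ℂ) (hV₁ : V₁ᴴ * V₁ = 1)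
    (hPrim₁ : PrimitiveIso V₁)
    (ρ₁ : Matrix (Fin D₁) (Fin D₁) ℂ) (hρ₁pos : ρ₁.PosDef) (hρ₁tr : ρ₁.trace = 1)
    (hρ₁stat : schrodinger V₁ ρ₁ = ρ₁)
    (U : Matrix (Fin D₁) (Fin D₂) ℂ) (hU₁ : Uᴴ * U = 1) (hU₂ : U * Uᴴ = 1)
    (c : ℂ) (hc : ‖c‖ = 1)
    (V₂ : Matrix (Fin D₂ × Fin k) (Fin D₂) ℂ)
    (hV₂ : V₂ = c • ((Uᴴ ⊗ₖ (1 : Matrix (Fin k) (Fin k) ℂ)) * V₁ * U)) :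
    PrimitiveIso V₂ ∧
    (Uᴴ * ρ₁ * U).PosDef ∧ (Uᴴ * ρ₁ * U).trace = 1 ∧
    schrodinger V₂ (Uᴴ * ρ₁ * U) = Uᴴ * ρ₁ * U ∧
    ∀ n : ℕ, outputState V₁ ρ₁ n = outputState V₂ (Uᴴ * ρ₁ * U) n :=
  gauge_equivalent_isometries_same_output_general D₁ D₂ k V₁ hPrim₁ ρ₁ hρ₁pos hρ₁tr hρ₁stat U hU₁
    hU₂ c hc V₂ hV₂
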